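/- arXiv:2010.14809 — 2 statements merged into one kernel-verified Lean document; each statement's English description precedes it below -/
import Mathlib

section
/- Let s > 1 be a real number and n ≥ 1 an integer. Then ∫_𝔻 |z|^{2ns} (1−|z|²)^{2s−2} dm(z) ≤ (π^{1−s}/(2s−1)) · (∫_𝔻 |z|^{2n} dm(z))^s, where 𝔻 is the open unit disc in ℂ and dm is Lebesgue area measure; in other words, the Lieb–Solovej inequality on the unit disc holds for the monomial G(z) = zⁿ. -/
/-!
In polar coordinates with `t = |z|²` the left side is `π ∫₀¹ t^{ns} (1-t)^{2s-2} dt`, and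
`∫_𝔻 |z|^{2n} = π/(n+1)`. Write the integrand as `tⁿ (tⁿ (1-t)²)^{s-1}` and bound
`(n+1) tⁿ (1-t)² ≤ (1-t^{n+1})²`, which is
`(n+1) tⁿ = ∑ⱼ tʲ tⁿ⁻ʲ ≤ (1 + t + ⋯ + tⁿ)²`.
The majorant `(n+1)^{1-s} tⁿ (1-t^{n+1})^{2s-2}` integrates, via `u = t^{n+1}`, to
`(n+1)^{-s}/(2s-1)`, and `π (n+1)^{-s}/(2s-1)` is exactly the right side.
-/

open MeasureTheory Real Set

theorem integral_ball_zero_fun_norm (g : ℝ → ℝ) {R : ℝ} (hR : 0 ≤ R) :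
    ∫ z in Metric.ball (0 : ℂ) R, g ‖z‖ = 2 * π * ∫ r in 0..R, r * g r := by
  have hball : Metric.ball (0 : ℂ) R = norm ⁻¹' Iio R := by
    ext z; simp
  have hradial : ∫ r in Ioi (0 : ℝ), r ^ (2 - 1) • (Iio R).indicator g r
      = ∫ r in 0..R, r * g r := by
    have hind : (fun r => r ^ (2 - 1) • (Iio R).indicator g r)
        = (Iio R).indicator (fun r => r * g r) :=
      funext fun r => by simpa using (indicator_mul_right _ (fun r => r) g).symm
    rw [hind, integral_indicator measurableSet_Iio, Measure.restrict_restrict measurableSet_Iio,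
      Iio_inter_Ioi, intervalIntegral.integral_of_le hR, integral_Ioc_eq_integral_Ioo]
  rw [← integral_indicator measurableSet_ball, hball]
  simp_rw [← Function.comp_apply (f := g), indicator_comp_right]
  rw [integral_fun_norm_addHaar volume ((Iio R).indicator g), Complex.finrank_real_complex,
    hradial, measureReal_def, Complex.volume_ball]
  simp [NNReal.coe_real_pi]
  ring

theorem integral_pow_mul_comp_pow_succ (m : ℕ) {f : ℝ → ℝ} (hf : Continuous f) (a b : ℝ) :
    ∫ r in a..b, r ^ m * f (r ^ (m + 1))
      = (∫ u in a ^ (m + 1)..b ^ (m + 1), f u) / (m + 1) := by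
  have hderiv : ∀ r ∈ uIcc a b, HasDerivAt (fun r => r ^ (m + 1)) ((m + 1) * r ^ m) r :=
    fun r _ => by simpa using hasDerivAt_pow (m + 1) r
  rw [← intervalIntegral.integral_comp_mul_deriv hderiv (by fun_prop) hf,
    eq_div_iff (by positivity), ← intervalIntegral.integral_mul_const]
  congr 1 with r
  simp only [Function.comp_apply]
  ring

theorem integral_ball_zero_comp_norm_sq {g : ℝ → ℝ} (hg : Continuous g) {R : ℝ}
    (hR : 0 ≤ R) :
    ∫ z in Metric.ball (0 : ℂ) R, g (‖z‖ ^ 2) = π * ∫ t in 0..R ^ 2, g t := by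
  have hsubst := integral_pow_mul_comp_pow_succ 1 hg 0 R
  simp only [pow_one, one_add_one_eq_two, Nat.cast_one, ne_eq, OfNat.ofNat_ne_zero,
    not_false_eq_true, zero_pow] at hsubst
  rw [integral_ball_zero_fun_norm (fun r => g (r ^ 2)) hR, hsubst]
  ring

theorem integral_one_sub_rpow {a : ℝ} (ha : -1 < a) :
    ∫ u in 0..1, (1 - u) ^ a = 1 / (a + 1) := by
  simp [intervalIntegral.integral_comp_sub_left (fun u => u ^ a), integral_rpow (Or.inl ha),
    zero_rpow (by linarith : a + 1 ≠ 0)]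

theorem integral_pow_mul_one_sub_pow_succ_rpow {a : ℝ} (ha : 0 ≤ a) (n : ℕ) :
    ∫ t in 0..1, t ^ n * (1 - t ^ (n + 1)) ^ a = 1 / ((a + 1) * (n + 1)) := by
  have hcont : Continuous fun u : ℝ => (1 - u) ^ a :=
    (continuous_const.sub continuous_id).rpow_const fun _ => Or.inr ha
  rw [integral_pow_mul_comp_pow_succ n hcont, one_pow, zero_pow n.succ_ne_zero,
    integral_one_sub_rpow (by linarith), div_div]

theorem succ_mul_pow_le_geom_sum_sq {t : ℝ} (ht : 0 ≤ t) (n : ℕ) :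
    (n + 1) * t ^ n ≤ (∑ k ∈ Finset.range (n + 1), t ^ k) ^ 2 := by
  have hsplit : (n + 1) * t ^ n = ∑ j ∈ Finset.range (n + 1), t ^ j * t ^ (n - j) := by
    rw [Finset.sum_congr rfl fun j hj => by
      rw [← pow_add, Nat.add_sub_cancel' (Finset.mem_range_succ_iff.mp hj)]]
    simp
  rw [hsplit, sq, Finset.sum_mul]
  gcongr with j hj
  exact Finset.single_le_sum (fun k _ => pow_nonneg ht k)
    (Finset.mem_range_succ_iff.mpr (Nat.sub_le n j))

theorem succ_mul_pow_mul_one_sub_sq_le {t : ℝ} (ht : 0 ≤ t) (n : ℕ) :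
    (n + 1) * (t ^ n * (1 - t) ^ 2) ≤ (1 - t ^ (n + 1)) ^ 2 := by
  have hgeom : 1 - t ^ (n + 1) = (∑ k ∈ Finset.range (n + 1), t ^ k) * (1 - t) := by
    linear_combination geom_sum_mul t (n + 1)
  rw [hgeom, mul_pow, ← mul_assoc]
  gcongr
  exact succ_mul_pow_le_geom_sum_sq ht n

theorem rpow_mul_one_sub_rpow_le {s t : ℝ} (hs : 1 ≤ s) (ht₀ : 0 ≤ t) (ht₁ : t ≤ 1)
    (n : ℕ) :
    t ^ (n * s) * (1 - t) ^ (2 * s - 2)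
      ≤ (n + 1) ^ (1 - s) * (t ^ n * (1 - t ^ (n + 1)) ^ (2 * s - 2)) := by
  have htn : 0 ≤ t ^ n := pow_nonneg ht₀ n
  have h1t : 0 ≤ 1 - t := by linarith
  have h1tn : 0 ≤ 1 - t ^ (n + 1) := by linarith [pow_le_one₀ ht₀ ht₁ (n := n + 1)]
  have hsq : ∀ {x : ℝ}, 0 ≤ x → x ^ (2 * s - 2) = (x ^ 2) ^ (s - 1) := fun hx => by
    rw [← rpow_natCast_mul hx]; push_cast; ring_nf
  have hpow : t ^ (n * s) = t ^ n * (t ^ n) ^ (s - 1) := by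
    rw [rpow_natCast_mul ht₀, ← rpow_one_add' htn (by linarith), add_sub_cancel]
  have hpoly : t ^ n * (1 - t) ^ 2 ≤ (n + 1) ^ (-1 : ℝ) * (1 - t ^ (n + 1)) ^ 2 := by
    rw [rpow_neg_one, ← div_eq_inv_mul, le_div_iff₀ (by positivity), mul_comm]
    exact succ_mul_pow_mul_one_sub_sq_le ht₀ n
  calc t ^ (n * s) * (1 - t) ^ (2 * s - 2)
      = t ^ n * (t ^ n * (1 - t) ^ 2) ^ (s - 1) := by
        rw [hpow, hsq h1t, mul_rpow htn (sq_nonneg _)]; ring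
    _ ≤ t ^ n * ((n + 1) ^ (-1 : ℝ) * (1 - t ^ (n + 1)) ^ 2) ^ (s - 1) := by
        gcongr
    _ = (n + 1) ^ (1 - s) * (t ^ n * (1 - t ^ (n + 1)) ^ (2 * s - 2)) := by
        rw [mul_rpow (by positivity) (sq_nonneg _), ← rpow_mul (by positivity), hsq h1tn]
        ring_nf

theorem integral_rpow_mul_one_sub_rpow_le {s : ℝ} (hs : 1 ≤ s) (n : ℕ) :
    ∫ t in 0..1, t ^ (n * s) * (1 - t) ^ (2 * s - 2)
      ≤ (n + 1) ^ (1 - s) / ((2 * s - 1) * (n + 1)) := by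
  have hcont : Continuous fun u : ℝ => (1 - u) ^ (2 * s - 2) :=
    (continuous_const.sub continuous_id).rpow_const fun _ => Or.inr (by linarith)
  calc ∫ t in 0..1, t ^ (n * s) * (1 - t) ^ (2 * s - 2)
      ≤ ∫ t in 0..1, (n + 1) ^ (1 - s) * (t ^ n * (1 - t ^ (n + 1)) ^ (2 * s - 2)) :=
        intervalIntegral.integral_mono_on zero_le_one
          (((continuous_id.rpow_const fun _ => Or.inr (by positivity)).mul
            hcont).intervalIntegrable 0 1)
          ((continuous_const.mul ((continuous_pow n).mul
            (hcont.comp (continuous_pow (n + 1))))).intervalIntegrable 0 1)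
          fun t ht => rpow_mul_one_sub_rpow_le hs ht.1 ht.2 n
    _ = (n + 1) ^ (1 - s) / ((2 * s - 1) * (n + 1)) := by
        rw [intervalIntegral.integral_const_mul,
          integral_pow_mul_one_sub_pow_succ_rpow (by linarith), mul_one_div]
        ring_nf

theorem lieb_solovej_disc_monomials_general (s : ℝ) (hs : 1 < s) (n : ℕ) :
    ∫ z in {z : ℂ | ‖z‖ < 1},
        ‖z‖ ^ (2 * (n : ℝ) * s) * (1 - ‖z‖ ^ 2) ^ (2 * s - 2)
      ≤ (π ^ (1 - s) / (2 * s - 1)) *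
        (∫ z in {z : ℂ | ‖z‖ < 1}, ‖z‖ ^ (2 * n)) ^ s := by
  have hdisc : {z : ℂ | ‖z‖ < 1} = Metric.ball 0 1 := by ext; simp
  have hsq : ∀ z : ℂ, ‖z‖ ^ (2 * (n : ℝ) * s) = (‖z‖ ^ 2) ^ (n * s) := fun z => by
    rw [← rpow_natCast_mul (norm_nonneg z)]; push_cast; ring_nf
  have hmass : ∫ z in Metric.ball (0 : ℂ) 1, ‖z‖ ^ (2 * n) = π / (n + 1) := by
    simp_rw [pow_mul]
    rw [integral_ball_zero_comp_norm_sq (continuous_pow n) zero_le_one]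
    simp [integral_pow, div_eq_mul_inv]
  have hcont : Continuous fun t : ℝ => t ^ (n * s) * (1 - t) ^ (2 * s - 2) := by
    refine (continuous_id.rpow_const fun _ => Or.inr ?_).mul
      ((continuous_const.sub continuous_id).rpow_const fun _ => Or.inr ?_)
    · exact mul_nonneg n.cast_nonneg (by linarith)
    · linarith
  rw [hdisc, hmass]
  simp_rw [hsq]
  rw [integral_ball_zero_comp_norm_sq hcont zero_le_one, one_pow]
  have hn : (0 : ℝ) < n + 1 := by positivity
  calc π * ∫ t in 0..1, t ^ (n * s) * (1 - t) ^ (2 * s - 2)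
      ≤ π * ((n + 1) ^ (1 - s) / ((2 * s - 1) * (n + 1))) := by
        gcongr
        exact integral_rpow_mul_one_sub_rpow_le hs.le n
    _ = π ^ (1 - s) / (2 * s - 1) * (π / (n + 1)) ^ s := by
      rw [div_rpow pi_pos.le hn.le, rpow_sub pi_pos, rpow_sub hn, rpow_one, rpow_one]
      have : 2 * s - 1 ≠ 0 := by linarith
      field_simp

/-- The Lieb–Solovej inequality on the unit disc holds for the monomials `z ↦ zⁿ`. -/
theorem lieb_solovej_disc_monomials (s : ℝ) (hs : 1 < s) (n : ℕ) (hn : 1 ≤ n) :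
    ∫ z in {z : ℂ | ‖z‖ < 1},
        ‖z‖ ^ (2 * (n : ℝ) * s) * (1 - ‖z‖ ^ 2) ^ (2 * s - 2)
      ≤ (π ^ (1 - s) / (2 * s - 1)) *
        (∫ z in {z : ℂ | ‖z‖ < 1}, ‖z‖ ^ (2 * n)) ^ s :=
  lieb_solovej_disc_monomials_general s hs n
end

section
/- Let s ≥ 1 be a real number. For every holomorphic function F on Π⁺ with ∫_{Π⁺} |F(x+iy)|² dx dy < ∞, one has ∫_{Π⁺} |F(x+iy)|^{2s} y^{2s−2} dx dy ≤ (π^{1−s} / 2^{2s−2}) · (∫_{Π⁺} |F(x+iy)|² dx dy)^s. -/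
/-!
Fix `x + iy` in the upper half-plane. The Cayley map `φ w = x + iy (1 + w) / (1 - w)` sends the
unit disc into the upper half-plane with `φ 0 = x + iy` and `φ' 0 = 2iy`. The sub-mean-value
inequality `π |f 0|² ≤ ∫_𝔻 |f|²` (from the mean value property of `f²` on circles) applied to
`f = φ' · F ∘ φ`, together with the change of variables `∫_𝔻 |φ'|² |F ∘ φ|² = ∫_{φ 𝔻} |F|²`, gives
`4π y² |F(x + iy)|² ≤ ‖F‖²`. Hence
`|F|^{2s} y^{2s-2} = |F|² (|F|² y²)^{s-1} ≤ (‖F‖² / 4π)^{s-1} |F|²`; integrate.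
-/

open MeasureTheory Real Set Metric Complex

lemma DifferentiableOn.two_pi_mul_sq_norm_le_integral_circleMap {f : ℂ → ℂ} {R r : ℝ}
    (hf : DifferentiableOn ℂ f (ball 0 R)) (hr : 0 ≤ r) (hrR : r < R) :
    2 * π * ‖f 0‖ ^ 2 ≤ ∫ θ in -π..π, ‖f (circleMap 0 r θ)‖ ^ 2 := by
  have hmean : circleAverage (f * f) 0 r = f 0 * f 0 :=
    ((hf.mul hf).diffContOnCl_ball
      (by simpa [abs_of_nonneg hr] using closedBall_subset_ball hrR)).circleAverage
  have hper : Function.Periodic (fun θ ↦ ‖f (circleMap 0 r θ)‖ ^ 2) (2 * π) :=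
    fun θ ↦ by simp only [periodic_circleMap 0 r θ]
  have hshift := hper.intervalIntegral_add_eq (-π) 0
  rw [show -π + 2 * π = π by ring, zero_add] at hshift
  rw [hshift]
  calc 2 * π * ‖f 0‖ ^ 2 = ‖(2 * π) • circleAverage (f * f) 0 r‖ := by
        simp [hmean, abs_of_pos pi_pos, sq]
    _ = ‖∫ θ in 0..2 * π, (f * f) (circleMap 0 r θ)‖ := by
        rw [circleAverage_def, smul_inv_smul₀ (by positivity)]
    _ ≤ ∫ θ in 0..2 * π, ‖f (circleMap 0 r θ)‖ ^ 2 := by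
        refine (intervalIntegral.norm_integral_le_integral_norm (by positivity)).trans_eq ?_
        simp [sq]

lemma Complex.polarCoord_symm_eq_circleMap (p : ℝ × ℝ) :
    Complex.polarCoord.symm p = circleMap 0 p.1 p.2 := by
  simp [circleMap, Complex.exp_mul_I]

lemma setLIntegral_Ioo_zero_ofReal {R : ℝ} (hR : 0 ≤ R) :
    ∫⁻ r in Ioo 0 R, ENNReal.ofReal r = ENNReal.ofReal (R ^ 2 / 2) := by
  rw [← ofReal_integral_eq_lintegral_ofReal, integral_Ioc_eq_integral_Ioo.symm,
    ← intervalIntegral.integral_of_le hR, integral_id]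
  · simp
  · exact continuous_id.integrableOn_Icc.mono_set Ioo_subset_Icc_self
  · exact (ae_restrict_iff' measurableSet_Ioo).2 (ae_of_all _ fun r hr ↦ hr.1.le)

lemma DifferentiableOn.pi_mul_sq_mul_sq_norm_le_lintegral_ball {f : ℂ → ℂ} {R : ℝ}
    (hf : DifferentiableOn ℂ f (ball 0 R)) (hR : 0 ≤ R) :
    ENNReal.ofReal (π * R ^ 2 * ‖f 0‖ ^ 2) ≤ ∫⁻ z in ball 0 R, ENNReal.ofReal (‖f z‖ ^ 2) := by
  set g : ℂ → ENNReal := fun z ↦ ENNReal.ofReal (‖f z‖ ^ 2)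
  set s : Set (ℝ × ℝ) := Ioo 0 R ×ˢ Ioo (-π) π
  have hs : MeasurableSet s := measurableSet_Ioo.prod measurableSet_Ioo
  have hcont : ContinuousOn (fun p : ℝ × ℝ ↦ ‖f (circleMap 0 p.1 p.2)‖ ^ 2) s := by
    refine ((hf.continuousOn.comp (by fun_prop) fun p hp ↦ ?_).norm).pow 2
    simpa [abs_of_pos hp.1.1] using hp.1.2
  have hcircle : ∀ r ∈ Ioo 0 R,
      ENNReal.ofReal (2 * π * ‖f 0‖ ^ 2) ≤ ∫⁻ θ in Ioo (-π) π, g (circleMap 0 r θ) := by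
    intro r hr
    have hint : IntegrableOn (fun θ ↦ ‖f (circleMap 0 r θ)‖ ^ 2) (Ioo (-π) π) := by
      refine (Continuous.integrableOn_Icc ?_).mono_set Ioo_subset_Icc_self
      refine ((hf.continuousOn.comp_continuous (continuous_circleMap 0 r) fun θ ↦ ?_).norm).pow 2
      simpa [abs_of_pos hr.1] using hr.2
    rw [← ofReal_integral_eq_lintegral_ofReal hint (ae_of_all _ fun _ ↦ by positivity),
      ← integral_Ioc_eq_integral_Ioo, ← intervalIntegral.integral_of_le (by linarith [pi_pos])]
    exact ENNReal.ofReal_le_ofReal (hf.two_pi_mul_sq_norm_le_integral_circleMap hr.1.le hr.2)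
  calc ENNReal.ofReal (π * R ^ 2 * ‖f 0‖ ^ 2)
      = ∫⁻ r in Ioo 0 R, ENNReal.ofReal r * ENNReal.ofReal (2 * π * ‖f 0‖ ^ 2) := by
        rw [lintegral_mul_const' _ _ ENNReal.ofReal_ne_top, setLIntegral_Ioo_zero_ofReal hR,
          ← ENNReal.ofReal_mul (by positivity)]
        ring_nf
    _ ≤ ∫⁻ r in Ioo 0 R, ∫⁻ θ in Ioo (-π) π, ENNReal.ofReal r * g (circleMap 0 r θ) := by
        refine setLIntegral_mono' measurableSet_Ioo fun r hr ↦ ?_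
        rw [lintegral_const_mul' _ _ ENNReal.ofReal_ne_top]
        exact mul_le_mul_right (hcircle r hr) _
    _ = ∫⁻ p in s, ENNReal.ofReal p.1 * g (circleMap 0 p.1 p.2) := by
        rw [Measure.volume_eq_prod, setLIntegral_prod]
        exact measurable_fst.ennreal_ofReal.aemeasurable.mul
          (ENNReal.measurable_ofReal.comp_aemeasurable (hcont.aemeasurable hs))
    _ = ∫⁻ p in s, ENNReal.ofReal p.1 • (ball 0 R).indicator g (Complex.polarCoord.symm p) := by
        refine setLIntegral_congr_fun hs fun p hp ↦ ?_
        rw [Complex.polarCoord_symm_eq_circleMap,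
          indicator_of_mem (by simpa [abs_of_pos hp.1.1] using hp.1.2)]
        rfl
    _ ≤ ∫⁻ p in polarCoord.target,
          ENNReal.ofReal p.1 • (ball 0 R).indicator g (Complex.polarCoord.symm p) :=
        lintegral_mono_set (by rw [polarCoord_target]; exact prod_mono Ioo_subset_Ioi_self le_rfl)
    _ = ∫⁻ z in ball 0 R, g z := by
        rw [Complex.lintegral_comp_polarCoord_symm, lintegral_indicator measurableSet_ball]

lemma Complex.det_restrictScalars_toSpanSingleton (c : ℂ) :
    ((ContinuousLinearMap.toSpanSingleton ℂ c).restrictScalars ℝ).det = ‖c‖ ^ 2 := by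
  rw [← normSq_eq_norm_sq, ← Algebra.norm_complex_apply, Algebra.norm_apply]
  show LinearMap.det _ = LinearMap.det _
  congr 1
  refine LinearMap.ext fun z ↦ ?_
  simp [mul_comm]

lemma lintegral_image_eq_lintegral_sq_norm_deriv_mul {s : Set ℂ} {φ φ' : ℂ → ℂ}
    (hs : MeasurableSet s) (hφ : ∀ w ∈ s, HasDerivAt φ (φ' w) w) (hinj : InjOn φ s)
    (g : ℂ → ENNReal) :
    ∫⁻ z in φ '' s, g z = ∫⁻ w in s, ENNReal.ofReal (‖φ' w‖ ^ 2) * g (φ w) := by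
  rw [lintegral_image_eq_lintegral_abs_det_fderiv_mul volume hs
    (fun w hw ↦ ((hφ w hw).hasFDerivAt.restrictScalars ℝ).hasFDerivWithinAt) hinj]
  simp only [det_restrictScalars_toSpanSingleton, abs_sq]

noncomputable def diskToHalfPlane (x y : ℝ) (w : ℂ) : ℂ := x + y * I * (1 + w) / (1 - w)

lemma diskToHalfPlane_zero (x y : ℝ) : diskToHalfPlane x y 0 = x + y * I := by
  simp [diskToHalfPlane]

lemma hasDerivAt_diskToHalfPlane (x y : ℝ) {w : ℂ} (hw : w ≠ 1) :
    HasDerivAt (diskToHalfPlane x y) (2 * y * I / (1 - w) ^ 2) w := by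
  have hw' : 1 - w ≠ 0 := sub_ne_zero.2 hw.symm
  have h := ((((hasDerivAt_id w).const_add 1).const_mul (y * I)).div
    ((hasDerivAt_id w).const_sub 1) hw').const_add (x : ℂ)
  exact h.congr_deriv (by simp only [id]; ring)

lemma im_diskToHalfPlane (x y : ℝ) (w : ℂ) :
    (diskToHalfPlane x y w).im = y * (1 - ‖w‖ ^ 2) / ‖1 - w‖ ^ 2 := by
  simp only [diskToHalfPlane, add_im, ofReal_im, div_im, mul_im, mul_re, ofReal_re, I_re,
    mul_zero, I_im, mul_one, sub_self, one_im, zero_add, zero_mul, add_zero, add_re, one_re, sub_re,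
    normSq_apply, sub_im, zero_sub, mul_neg, neg_mul, neg_neg, ← normSq_eq_norm_sq]
  ring

lemma injOn_diskToHalfPlane (x : ℝ) {y : ℝ} (hy : y ≠ 0) :
    InjOn (diskToHalfPlane x y) {1}ᶜ := by
  intro w₁ hw₁ w₂ hw₂ h
  have h₁ : 1 - w₁ ≠ 0 := sub_ne_zero.2 (Ne.symm hw₁)
  have h₂ : 1 - w₂ ≠ 0 := sub_ne_zero.2 (Ne.symm hw₂)
  have hyI : (y : ℂ) * I ≠ 0 := mul_ne_zero (ofReal_ne_zero.2 hy) I_ne_zero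
  simp only [diskToHalfPlane, add_right_inj, mul_div_assoc] at h
  have := mul_left_cancel₀ hyI h
  field_simp at this
  linear_combination this / 2

lemma DifferentiableOn.four_pi_mul_sq_mul_sq_norm_le_lintegral_im_pos {F : ℂ → ℂ}
    (hF : DifferentiableOn ℂ F {z | 0 < z.im}) (x : ℝ) {y : ℝ} (hy : 0 < y) :
    ENNReal.ofReal (4 * π * y ^ 2 * ‖F (x + y * I)‖ ^ 2)
      ≤ ∫⁻ z in {z : ℂ | 0 < z.im}, ENNReal.ofReal (‖F z‖ ^ 2) := by
  set φ := diskToHalfPlane x y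
  set φ' : ℂ → ℂ := fun w ↦ 2 * y * I / (1 - w) ^ 2
  have hne : ∀ w ∈ ball (0 : ℂ) 1, 1 - w ≠ 0 := by
    rintro w hw h
    rw [← eq_of_sub_eq_zero h] at hw
    simp at hw
  have hderiv : ∀ w ∈ ball (0 : ℂ) 1, HasDerivAt φ (φ' w) w :=
    fun w hw ↦ hasDerivAt_diskToHalfPlane x y (sub_ne_zero.1 (hne w hw)).symm
  have hmaps : MapsTo φ (ball 0 1) {z | 0 < z.im} := by
    intro w hw
    have hw1 : ‖w‖ < 1 := mem_ball_zero_iff.1 hw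
    show 0 < (φ w).im
    rw [im_diskToHalfPlane]
    exact div_pos (mul_pos hy (by nlinarith [norm_nonneg w]))
      (pow_pos (norm_pos_iff.2 (hne w hw)) 2)
  have hf : DifferentiableOn ℂ (fun w ↦ φ' w * F (φ w)) (ball 0 1) :=
    (DifferentiableOn.div (by fun_prop) (by fun_prop) fun w hw ↦ pow_ne_zero 2 (hne w hw)).mul
      (hF.comp (fun w hw ↦ (hderiv w hw).differentiableAt.differentiableWithinAt) hmaps)
  calc ENNReal.ofReal (4 * π * y ^ 2 * ‖F (x + y * I)‖ ^ 2)
      = ENNReal.ofReal (π * 1 ^ 2 * ‖φ' 0 * F (φ 0)‖ ^ 2) := by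
        simp only [φ, φ', one_pow, mul_one, sub_zero, div_one, diskToHalfPlane_zero, norm_mul,
          Complex.norm_ofNat, norm_real, norm_eq_abs, abs_of_pos hy, norm_I]
        ring_nf
    _ ≤ ∫⁻ w in ball 0 1, ENNReal.ofReal (‖φ' w * F (φ w)‖ ^ 2) :=
        hf.pi_mul_sq_mul_sq_norm_le_lintegral_ball zero_le_one
    _ = ∫⁻ z in φ '' ball 0 1, ENNReal.ofReal (‖F z‖ ^ 2) := by
        rw [lintegral_image_eq_lintegral_sq_norm_deriv_mul measurableSet_ball hderiv
          ((injOn_diskToHalfPlane x hy.ne').mono fun w hw ↦ (sub_ne_zero.1 (hne w hw)).symm)]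
        simp only [norm_mul, mul_pow, ENNReal.ofReal_mul (sq_nonneg _)]
    _ ≤ ∫⁻ z in {z : ℂ | 0 < z.im}, ENNReal.ofReal (‖F z‖ ^ 2) :=
        lintegral_mono_set (image_subset_iff.2 hmaps)

lemma Complex.lintegral_im_pos_eq (g : ℂ → ENNReal) :
    ∫⁻ z in {z : ℂ | 0 < z.im}, g z = ∫⁻ p in {p : ℝ × ℝ | 0 < p.2}, g (p.1 + p.2 * I) := by
  rw [← (volume_preserving_equiv_real_prod.symm).setLIntegral_comp_preimage_emb
    measurableEquivRealProd.symm.measurableEmbedding]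
  simp [measurableEquivRealProd_symm_apply, mk_eq_add_mul_I]

lemma sq_norm_mul_sq_le_integral_div {F : ℂ → ℂ} (hF : DifferentiableOn ℂ F {z | 0 < z.im})
    (hInt : IntegrableOn (fun p : ℝ × ℝ ↦ ‖F (p.1 + p.2 * I)‖ ^ 2) {p : ℝ × ℝ | 0 < p.2})
    {p : ℝ × ℝ} (hp : 0 < p.2) :
    ‖F (p.1 + p.2 * I)‖ ^ 2 * p.2 ^ 2
      ≤ (∫ q in {q : ℝ × ℝ | 0 < q.2}, ‖F (q.1 + q.2 * I)‖ ^ 2) / (4 * π) := by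
  have h := hF.four_pi_mul_sq_mul_sq_norm_le_lintegral_im_pos p.1 hp
  rw [lintegral_im_pos_eq, ← ofReal_integral_eq_lintegral_ofReal hInt
    (ae_of_all _ fun _ ↦ by positivity), ENNReal.ofReal_le_ofReal_iff
    (integral_nonneg fun _ ↦ by positivity)] at h
  rw [le_div_iff₀ (by positivity)]
  linarith

lemma rpow_two_mul_mul_rpow_le {a y K s : ℝ} (ha : 0 ≤ a) (hy : 0 ≤ y) (hs : 1 ≤ s)
    (h : a ^ 2 * y ^ 2 ≤ K) :
    a ^ (2 * s) * y ^ (2 * s - 2) ≤ K ^ (s - 1) * a ^ 2 := by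
  have hsplit : a ^ (2 * s) = a ^ (2 * s - 2) * a ^ 2 := by
    rw [← rpow_natCast, ← rpow_add' ha (by push_cast; linarith)]
    norm_num
  have hmerge : (a ^ 2 * y ^ 2) ^ (s - 1) = a ^ (2 * s - 2) * y ^ (2 * s - 2) := by
    rw [← mul_pow, ← rpow_natCast, ← rpow_mul (by positivity), mul_rpow ha hy]
    ring_nf
  calc a ^ (2 * s) * y ^ (2 * s - 2) = (a ^ 2 * y ^ 2) ^ (s - 1) * a ^ 2 := by
        rw [hsplit, hmerge]; ring
    _ ≤ K ^ (s - 1) * a ^ 2 := by gcongr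

lemma div_four_pi_rpow_sub_one_mul_self {M s : ℝ} (hM : 0 ≤ M) (hs : s ≠ 0) :
    (M / (4 * π)) ^ (s - 1) * M = π ^ (1 - s) / 2 ^ (2 * s - 2) * M ^ s := by
  rcases hM.eq_or_lt with rfl | hM
  · simp [zero_rpow hs]
  rw [div_rpow hM.le (by positivity), mul_rpow (by norm_num) pi_pos.le, rpow_sub_one hM.ne',
    show 2 * s - 2 = 2 * (s - 1) by ring, rpow_mul zero_le_two, show 1 - s = -(s - 1) by ring,
    rpow_neg pi_pos.le]
  norm_num
  field_simp

/-- Preliminary bound: for `s ≥ 1`,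
`∫ |F|^{2s} y^{2s−2} ≤ (π^{1−s}/2^{2s−2}) (∫ |F|²)^s`. -/
theorem lieb_solovej_preliminary_bound (s : ℝ) (hs : 1 ≤ s) (F : ℂ → ℂ)
    (hF : DifferentiableOn ℂ F {z : ℂ | 0 < z.im})
    (hInt : IntegrableOn
      (fun p : ℝ × ℝ => ‖F (p.1 + p.2 * Complex.I)‖ ^ 2)
      {p : ℝ × ℝ | 0 < p.2}) :
    ∫ p in {p : ℝ × ℝ | 0 < p.2},
        ‖F (p.1 + p.2 * Complex.I)‖ ^ (2 * s) * p.2 ^ (2 * s - 2)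
      ≤ (π ^ (1 - s) / 2 ^ (2 * s - 2)) *
        (∫ p in {p : ℝ × ℝ | 0 < p.2},
          ‖F (p.1 + p.2 * Complex.I)‖ ^ 2) ^ s := by
  set M := ∫ p in {p : ℝ × ℝ | 0 < p.2}, ‖F (p.1 + p.2 * I)‖ ^ 2
  have hS : MeasurableSet {p : ℝ × ℝ | 0 < p.2} := measurableSet_lt measurable_const measurable_snd
  calc _ ≤ ∫ p in {p : ℝ × ℝ | 0 < p.2}, (M / (4 * π)) ^ (s - 1) * ‖F (p.1 + p.2 * I)‖ ^ 2 := by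
        refine integral_mono_of_nonneg ((ae_restrict_iff' hS).2 (ae_of_all _ fun p hp ↦ ?_))
          (hInt.const_mul _) ((ae_restrict_iff' hS).2 (ae_of_all _ fun p hp ↦ ?_))
        · exact mul_nonneg (rpow_nonneg (norm_nonneg _) _) (rpow_nonneg (le_of_lt hp) _)
        · exact rpow_two_mul_mul_rpow_le (norm_nonneg _) (le_of_lt hp) hs
            (sq_norm_mul_sq_le_integral_div hF hInt hp)
    _ = (M / (4 * π)) ^ (s - 1) * M := integral_const_mul _ _
    _ = _ := div_four_pi_rpow_sub_one_mul_self (integral_nonneg fun _ ↦ by positivity)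
        (by linarith)
end
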